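/- The lifted regular tree grammar G_D over D(Σ) for the {aⁿbⁿcⁿ} grammar — with productions S → S(F,a,b,c), F → S(⌢,S(⌢,π_1,π_2),π_3) | S(F, S(⌢,π_1,a), S(⌢,π_2,b), S(⌢,π_3,c)) — generates a regular tree language whose image under the evaluation map β is exactly the inside-out context-free tree language of the original grammar, hence a tree set with yield {aⁿbⁿcⁿ | n ≥ 1}. -/

import Mathlib

/-- A single-sorted ranked alphabet: for each rank `n`, a type of operators. -/
def Sig : Type 1 := ℕ → Type

/-- Terms over a ranked alphabet `σ` with variables `x_1, …, x_k`. -/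
inductive Tm (σ : Sig) (k : ℕ) : Type where
  | var : Fin k → Tm σ k
  | op : {n : ℕ} → σ n → (Fin n → Tm σ k) → Tm σ k

/-- Simultaneous (first-order) substitution `t[t_1,…,t_m]`. -/
def Tm.subst {σ : Sig} {m k : ℕ} : Tm σ m → (Fin m → Tm σ k) → Tm σ k
  | .var i, f => f i
  | .op s ts, f => .op s (fun j => (ts j).subst f)

/-- Explicit trees over the derived alphabet `D(σ)`: sort `k` corresponds to
the type `⟨ε,k⟩`.  Constructors: projections `π_i^k`, the symbols of `σ` as
constants, and the substitution/composition operators `S_{n,k}`. -/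
inductive DTm (σ : Sig) : ℕ → Type where
  | proj : {k : ℕ} → Fin k → DTm σ k
  | sym : {n : ℕ} → σ n → DTm σ n
  | sub : {n k : ℕ} → DTm σ n → (Fin n → DTm σ k) → DTm σ k

/-- The evaluation homomorphism `β` from the derived term algebra to the tree
substitution algebra: `σ ↦ σ(x_1,…,x_n)`, `π_i^k ↦ x_i`, and substitution
symbols are interpreted as actual substitution. -/
def DTm.beta {σ : Sig} : {k : ℕ} → DTm σ k → Tm σ k
  | _, .proj i => .var i
  | _, .sym s => .op s (fun i => .var i)
  | _, .sub t ts => (t.beta).subst (fun i => (ts i).beta)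

/-- `LIFT_k : T(σ,X_k) → T(D(σ),⟨ε,k⟩)`:  `x_i ↦ π_i^k`,
`σ(t_1,…,t_n) ↦ S_{n,k}(σ, LIFT t_1, …, LIFT t_n)` (for `n = 0` this is
`S_{0,k}(σ)`). -/
def Tm.lift {σ : Sig} {k : ℕ} : Tm σ k → DTm σ k
  | .var i => .proj i
  | .op s ts => .sub (.sym s) (fun i => (ts i).lift)

/-- Disjoint union of two ranked alphabets (terminals ⊕ nonterminals). -/
def sumSig (σ τ : Sig) : Sig := fun n => σ n ⊕ τ n

/-- Inclusion of terminal trees into trees over the extended alphabet. -/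
def Tm.inj {σ τ : Sig} {k : ℕ} : Tm σ k → Tm (sumSig σ τ) k
  | .var i => .var i
  | .op s ts => .op (Sum.inl s) (fun i => (ts i).inj)

/-- Number of occurrences of the variable in a one-variable tree. -/
def Tm.countVar {σ : Sig} : Tm σ 1 → ℕ
  | .var _ => 1
  | .op (n := n) _ ts => ∑ j : Fin n, (ts j).countVar

/-- A context-free tree grammar: terminals `σ`, nonterminals `τ`, a start
symbol of rank 0, and a set of productions `F(x_1,…,x_m) → t` with
`t ∈ T(σ∪τ, X_m)`. -/
structure CFTG (σ τ : Sig) where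
  start : τ 0
  P : Set ((m : ℕ) × τ m × Tm (sumSig σ τ) m)

/-- One inside-out (IO) derivation step: replace an occurrence (in a
one-hole context `c`) of a subtree `F(t_1,…,t_m)`, with all `t_i` terminal
trees, by `rhs[t_1,…,t_m]`. -/
def IOStep {σ τ : Sig} (P : Set ((m : ℕ) × τ m × Tm (sumSig σ τ) m))
    (t t' : Tm (sumSig σ τ) 0) : Prop :=
  ∃ (m : ℕ) (F : τ m) (rhs : Tm (sumSig σ τ) m),
    (⟨m, F, rhs⟩ : (m : ℕ) × τ m × Tm (sumSig σ τ) m) ∈ P ∧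
    ∃ (c : Tm (sumSig σ τ) 1) (args : Fin m → Tm σ 0),
      c.countVar = 1 ∧
      t = c.subst (fun _ => Tm.op (Sum.inr F) (fun i => (args i).inj)) ∧
      t' = c.subst (fun _ => rhs.subst (fun i => (args i).inj))

/-- The inside-out tree language generated by a context-free tree grammar. -/
def IOLang {σ τ : Sig} (G : CFTG σ τ) : Set (Tm σ 0) :=
  {t | Relation.ReflTransGen (IOStep G.P)
        (Tm.op (Sum.inr G.start) Fin.elim0) t.inj}

/-- The yield of a tree: concatenation of the letters attached to its leaves,
read left to right; `w` assigns a string to each symbol (non-nullary symbols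
are assigned the empty string), `f` assigns strings to variables. -/
def Tm.yield {σ : Sig} {A : Type} (w : {n : ℕ} → σ n → List A) {k : ℕ} :
    Tm σ k → (Fin k → List A) → List A
  | .var i, f => f i
  | .op s ts, f => w s ++ (List.ofFn fun j => (ts j).yield (fun {_} => w) f).flatten

/-- Inclusion of derived trees over the terminal alphabet into derived trees
over the extended alphabet. -/
def DTm.dInj {σ τ : Sig} : {k : ℕ} → DTm σ k → DTm (sumSig σ τ) k
  | _, .proj i => .proj i
  | _, .sym s => .sym (Sum.inl s)
  | _, .sub t ts => .sub t.dInj (fun i => (ts i).dInj)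

/-- One derivation step of the lifted (derived) regular tree grammar over
`D(σ∪τ)`: replace one occurrence of a nonterminal constant `F` by the `LIFT`
of the right-hand side of a production `F(x_1,…,x_m) → rhs` of the original
context-free tree grammar. -/
inductive StepD {σ τ : Sig} (P : Set ((m : ℕ) × τ m × Tm (sumSig σ τ) m)) :
    {k : ℕ} → DTm (sumSig σ τ) k → DTm (sumSig σ τ) k → Prop
  | head {m : ℕ} {F : τ m} {rhs : Tm (sumSig σ τ) m} :
      (⟨m, F, rhs⟩ : (m : ℕ) × τ m × Tm (sumSig σ τ) m) ∈ P →
      StepD P (.sym (Sum.inr F)) rhs.lift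
  | congHead {n k : ℕ} {t t' : DTm (sumSig σ τ) n}
      (ts : Fin n → DTm (sumSig σ τ) k) :
      StepD P t t' → StepD P (.sub t ts) (.sub t' ts)
  | congArg {n k : ℕ} (t : DTm (sumSig σ τ) n)
      {ts : Fin n → DTm (sumSig σ τ) k} (i : Fin n) {u : DTm (sumSig σ τ) k} :
      StepD P (ts i) u → StepD P (.sub t ts) (.sub t (Function.update ts i u))

/-- Nullary symbols `a, b, c`. -/
inductive C3 : Type
  | a | b | c
deriving DecidableEq

/-- The signature with `Σ_0 = {a,b,c}` and `Σ_2 = {⌢}`. -/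
def sig9 : Sig := fun n =>
  match n with
  | 0 => C3
  | 2 => Unit
  | 1 => Empty
  | _ + 3 => Empty

/-- Letters for the yield homomorphism. -/
def w9 : {n : ℕ} → sig9 n → List C3
  | 0, s => [s]
  | 2, _ => []
  | 1, s => s.elim
  | _ + 3, s => s.elim

/-- Nonterminals `S` (rank 0) and `F` (rank 3). -/
def nt9 : Sig := fun n =>
  match n with
  | 0 => Unit
  | 3 => Unit
  | 1 => Empty
  | 2 => Empty
  | _ + 4 => Empty

abbrev C9 : Sig := sumSig sig9 nt9

/-- A terminal leaf, at any variable sort. -/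
def lf9 (x : C3) {k : ℕ} : Tm C9 k := .op (n := 0) (Sum.inl x) Fin.elim0

/-- `⌢(s,t)`. -/
def cat9 {k : ℕ} (s t : Tm C9 k) : Tm C9 k := .op (n := 2) (Sum.inl ()) ![s, t]

/-- Productions `S → F(a,b,c)` and
`F(x_1,x_2,x_3) → F(⌢(a,x_1), ⌢(b,x_2), ⌢(c,x_3)) | ⌢(⌢(x_1,x_2),x_3)`. -/
def P9 : Set ((m : ℕ) × nt9 m × Tm C9 m) :=
  { ⟨0, (), .op (n := 3) (Sum.inr ()) ![lf9 .a, lf9 .b, lf9 .c]⟩,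
    ⟨3, (), .op (n := 3) (Sum.inr ())
      ![cat9 (lf9 .a) (.var 0), cat9 (lf9 .b) (.var 1),
        cat9 (lf9 .c) (.var 2)]⟩,
    ⟨3, (), cat9 (cat9 (.var 0) (.var 1)) (.var 2)⟩ }

/-- The context-free tree grammar of STATEMENT 9. -/
def G9 : CFTG sig9 nt9 := ⟨(), P9⟩

/-!
Both grammars derive essentially deterministically. A sentential form of `G9` reachable from `S`
is either terminal or has its only nonterminal at the root, with terminal arguments, so an IO
step can only rewrite that root: the derivations are `S ⇒ F(a,b,c) ⇒ F(a⌢a, b⌢b, c⌢c) ⇒ ⋯`, possibly closed by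
`F(x₁,x₂,x₃) → (x₁⌢x₂)⌢x₃`. In the lifted grammar the nonterminal `F` sits at the head of a tower
of substitutions `S(·, S(⌢,π₁,a), S(⌢,π₂,b), S(⌢,π₃,c))` whose other arguments are terminal, so
the terminal derived trees are the towers built on `S(⌢,S(⌢,π₁,π₂),π₃)` and applied to `a, b, c`;
`β` evaluates each layer by substitution and yields the same trees `(aᵏ⁺¹ ⌢ bᵏ⁺¹) ⌢ cᵏ⁺¹`.
-/

namespace Tm

variable {σ τ : Sig}

theorem subst_subst {m k l : ℕ} (t : Tm σ m) (f : Fin m → Tm σ k) (g : Fin k → Tm σ l) :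
    (t.subst f).subst g = t.subst fun i => (f i).subst g := by
  induction t with
  | var i => rfl
  | op s ts ih => simp only [subst, ih]

theorem subst_var {k : ℕ} (t : Tm σ k) : t.subst .var = t := by
  induction t with
  | var i => rfl
  | op s ts ih => simp only [subst, ih]

@[simp]
theorem beta_lift {k : ℕ} (t : Tm σ k) : t.lift.beta = t := by
  induction t with
  | var i => rfl
  | op s ts ih => simp only [lift, DTm.beta, subst, ih]

theorem inj_injective {k : ℕ} : Function.Injective (Tm.inj (σ := σ) (τ := τ) (k := k)) := by
  intro s
  induction s with
  | var i => intro t h; cases t <;> simp_all [inj]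
  | op s ts ih =>
    intro t h
    cases t with
    | var j => simp [inj] at h
    | op s' ts' =>
      obtain ⟨rfl, hs, hts⟩ := Tm.op.injEq _ _ _ _ _ |>.mp h
      obtain rfl := Sum.inl_injective (eq_of_heq hs)
      exact congrArg _ (funext fun j => ih j (congrFun (eq_of_heq hts) j))

def HasNonterminal {k : ℕ} : Tm (sumSig σ τ) k → Prop
  | .var _ => False
  | .op (.inl _) ts => ∃ j, (ts j).HasNonterminal
  | .op (.inr _) _ => True

theorem hasNonterminal_op_inr {k n : ℕ} (F : τ n) (ts : Fin n → Tm (sumSig σ τ) k) :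
    (Tm.op (.inr F) ts).HasNonterminal :=
  trivial

theorem not_hasNonterminal_inj {k : ℕ} (t : Tm σ k) : ¬ (t.inj (τ := τ)).HasNonterminal := by
  induction t with
  | var i => simp [inj, HasNonterminal]
  | op s ts ih => simpa [inj, HasNonterminal] using ih

theorem hasNonterminal_subst {c : Tm (sumSig σ τ) 1} {u : Tm (sumSig σ τ) 0}
    (hc : c.countVar ≠ 0) (hu : u.HasNonterminal) : (c.subst fun _ => u).HasNonterminal := by
  induction c with
  | var i => exact hu
  | op s ts ih =>
    obtain ⟨j, -, hj⟩ := Finset.exists_ne_zero_of_sum_ne_zero hc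
    cases s with
    | inl s => exact ⟨j, ih j hj⟩
    | inr s => trivial

theorem eq_var_of_op_inj_eq_subst {n : ℕ} {s : sumSig σ τ n} {ds : Fin n → Tm σ 0}
    {c : Tm (sumSig σ τ) 1} {u : Tm (sumSig σ τ) 0} (hc : c.countVar ≠ 0)
    (hu : u.HasNonterminal) (h : Tm.op s (fun j => (ds j).inj) = c.subst fun _ => u) :
    c = .var 0 := by
  cases c with
  | var i => exact congrArg _ (Subsingleton.elim _ _)
  | op s' cs =>
    obtain ⟨j, -, hj⟩ := Finset.exists_ne_zero_of_sum_ne_zero hc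
    obtain ⟨rfl, -, hds⟩ := Tm.op.injEq _ _ _ _ _ |>.mp h
    have hdsj : (cs j).subst (fun _ => u) = (ds j).inj := (congrFun (eq_of_heq hds) j).symm
    exact (not_hasNonterminal_inj _ (hdsj ▸ hasNonterminal_subst hj hu)).elim

end Tm

namespace DTm

variable {σ τ : Sig}

def HasNonterminal : {k : ℕ} → DTm (sumSig σ τ) k → Prop
  | _, .proj _ => False
  | _, .sym (.inl _) => False
  | _, .sym (.inr _) => True
  | _, .sub t ts => t.HasNonterminal ∨ ∃ j, (ts j).HasNonterminal

theorem not_hasNonterminal_dInj {k : ℕ} (d : DTm σ k) :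
    ¬ (d.dInj (τ := τ)).HasNonterminal := by
  induction d with
  | proj i => simp [dInj, HasNonterminal]
  | sym s => simp [dInj, HasNonterminal]
  | sub t ts iht ihts => simpa [dInj, HasNonterminal, iht] using ihts

theorem exists_dInj_of_not_hasNonterminal {k : ℕ} {d : DTm (sumSig σ τ) k}
    (hd : ¬ d.HasNonterminal) : ∃ e : DTm σ k, e.dInj = d := by
  induction d with
  | proj i => exact ⟨.proj i, rfl⟩
  | sym s =>
    cases s with
    | inl s => exact ⟨.sym s, rfl⟩
    | inr s => exact absurd trivial hd
  | sub t ts iht ihts =>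
    simp only [HasNonterminal, not_or, not_exists] at hd
    obtain ⟨e, rfl⟩ := iht hd.1
    choose es hes using fun j => ihts j (hd.2 j)
    exact ⟨.sub e es, by simp only [dInj, hes]⟩

theorem not_hasNonterminal_lift {k : ℕ} {t : Tm (sumSig σ τ) k} (ht : ¬ t.HasNonterminal) :
    ¬ t.lift.HasNonterminal := by
  induction t with
  | var i => simp [Tm.lift, HasNonterminal]
  | op s ts ih =>
    cases s with
    | inl s =>
      simp only [Tm.HasNonterminal, not_exists] at ht
      rintro (h | ⟨j, hj⟩)
      · exact h
      · exact ih j (ht j) hj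
    | inr s => exact absurd trivial ht

end DTm

section Derivations

variable {σ τ : Sig} {P : Set ((m : ℕ) × τ m × Tm (sumSig σ τ) m)}

theorem IOStep.not_inj (t : Tm σ 0) (t' : Tm (sumSig σ τ) 0) : ¬ IOStep P t.inj t' := by
  rintro ⟨m, F, rhs, -, c, args, hc, ht, -⟩
  exact Tm.not_hasNonterminal_inj t
    (ht ▸ Tm.hasNonterminal_subst (by omega) (Tm.hasNonterminal_op_inr _ _))

theorem IOStep.op_inr_iff {m : ℕ} {F : τ m} {args : Fin m → Tm σ 0}
    {t' : Tm (sumSig σ τ) 0} :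
    IOStep P (.op (.inr F) fun i => (args i).inj) t' ↔
      ∃ rhs, ⟨m, F, rhs⟩ ∈ P ∧ t' = rhs.subst fun i => (args i).inj := by
  constructor
  · rintro ⟨m', F', rhs, hmem, c, args', hc, ht, rfl⟩
    obtain rfl := Tm.eq_var_of_op_inj_eq_subst (by omega) (Tm.hasNonterminal_op_inr _ _) ht
    obtain ⟨rfl, hF, hargs⟩ := Tm.op.injEq _ _ _ _ _ |>.mp ht
    obtain rfl := Sum.inr_injective (eq_of_heq hF)
    obtain rfl : args = args' :=
      funext fun i => Tm.inj_injective (congrFun (eq_of_heq hargs) i)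
    exact ⟨rhs, hmem, rfl⟩
  · rintro ⟨rhs, hmem, rfl⟩
    exact ⟨m, F, rhs, hmem, .var 0, args, rfl, rfl, rfl⟩

theorem StepD.hasNonterminal {k : ℕ} {d d' : DTm (sumSig σ τ) k} (h : StepD P d d') :
    d.HasNonterminal := by
  induction h with
  | head _ => trivial
  | congHead _ _ ih => exact .inl ih
  | congArg _ i _ ih => exact .inr ⟨i, ih⟩

theorem StepD.sym_inr_iff {m : ℕ} {F : τ m} {d : DTm (sumSig σ τ) m} :
    StepD P (.sym (.inr F)) d ↔ ∃ rhs, ⟨m, F, rhs⟩ ∈ P ∧ d = rhs.lift := by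
  constructor
  · rintro (hmem | _)
    exact ⟨_, hmem, rfl⟩
  · rintro ⟨rhs, hmem, rfl⟩
    exact .head hmem

theorem StepD.sub_iff {n k : ℕ} {t : DTm (sumSig σ τ) n} {ts : Fin n → DTm (sumSig σ τ) k}
    (hts : ∀ i, ¬ (ts i).HasNonterminal) {d : DTm (sumSig σ τ) k} :
    StepD P (.sub t ts) d ↔ ∃ t', StepD P t t' ∧ d = .sub t' ts := by
  constructor
  · rintro (_ | ⟨_, h⟩ | ⟨_, i, h⟩)
    · exact ⟨_, h, rfl⟩
    · exact absurd h.hasNonterminal (hts i)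
  · rintro ⟨t', h, rfl⟩
    exact .congHead ts h

theorem StepD.reflTransGen_sub_iff {n k : ℕ} {t : DTm (sumSig σ τ) n}
    {ts : Fin n → DTm (sumSig σ τ) k} (hts : ∀ i, ¬ (ts i).HasNonterminal)
    {d : DTm (sumSig σ τ) k} :
    Relation.ReflTransGen (StepD P) (.sub t ts) d ↔
      ∃ t', Relation.ReflTransGen (StepD P) t t' ∧ d = .sub t' ts := by
  constructor
  · intro h
    induction h with
    | refl => exact ⟨t, .refl, rfl⟩
    | tail _ hstep ih =>
      obtain ⟨t', ht', rfl⟩ := ih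
      obtain ⟨t'', hstep', rfl⟩ := (StepD.sub_iff hts).mp hstep
      exact ⟨t'', ht'.tail hstep', rfl⟩
  · rintro ⟨t', h, rfl⟩
    exact Relation.ReflTransGen.lift (p := StepD P) (fun x => DTm.sub x ts)
      (fun _ _ => .congHead ts) _ _ h

end Derivations

namespace G9

def leaf (x : C3) : Tm sig9 0 := .op (n := 0) x Fin.elim0

def conc (s t : Tm sig9 0) : Tm sig9 0 := .op (n := 2) () ![s, t]

/-- The right comb `x ⌢ (x ⌢ (⋯ ⌢ x))` with `k + 1` leaves. -/
def chain (x : C3) : ℕ → Tm sig9 0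
  | 0 => leaf x
  | k + 1 => conc (leaf x) (chain x k)

def tree (k : ℕ) : Tm sig9 0 := conc (conc (chain .a k) (chain .b k)) (chain .c k)

def letter : Fin 3 → C3 := ![.a, .b, .c]

def chains (k : ℕ) (i : Fin 3) : Tm sig9 0 := chain (letter i) k

theorem inj_leaf (x : C3) : (leaf x).inj (τ := nt9) = lf9 x := by
  simp only [leaf, lf9, Tm.inj]
  exact congrArg _ (Subsingleton.elim _ _)

theorem inj_conc (s t : Tm sig9 0) : (conc s t).inj (τ := nt9) = cat9 s.inj t.inj := by
  simp only [conc, cat9, Tm.inj]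
  refine congrArg _ (funext fun j => ?_)
  fin_cases j <;> rfl

theorem lf9_subst {m k : ℕ} (x : C3) (f : Fin m → Tm C9 k) : (lf9 x).subst f = lf9 x := by
  simp only [lf9, Tm.subst]
  exact congrArg _ (Subsingleton.elim _ _)

theorem cat9_subst {m k : ℕ} (s t : Tm C9 m) (f : Fin m → Tm C9 k) :
    (cat9 s t).subst f = cat9 (s.subst f) (t.subst f) := by
  simp only [cat9, Tm.subst]
  refine congrArg _ (funext fun j => ?_)
  fin_cases j <;> rfl

theorem not_hasNonterminal_lf9 {k : ℕ} (x : C3) : ¬ (lf9 x (k := k)).HasNonterminal := by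
  simp [lf9, Tm.HasNonterminal]

theorem hasNonterminal_cat9 {k : ℕ} (s t : Tm C9 k) :
    (cat9 s t).HasNonterminal ↔ s.HasNonterminal ∨ t.HasNonterminal := by
  simp [cat9, Tm.HasNonterminal, Fin.exists_fin_two]

def startArgs : Fin 3 → Tm C9 0 := ![lf9 .a, lf9 .b, lf9 .c]

def pumpArgs : Fin 3 → Tm C9 3 :=
  ![cat9 (lf9 .a) (.var 0), cat9 (lf9 .b) (.var 1), cat9 (lf9 .c) (.var 2)]

def rhsStart : Tm C9 0 := .op (n := 3) (.inr ()) startArgs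

def rhsPump : Tm C9 3 := .op (n := 3) (.inr ()) pumpArgs

def rhsConcat : Tm C9 3 := cat9 (cat9 (.var 0) (.var 1)) (.var 2)

theorem mem_P9_zero_iff {rhs : Tm C9 0} : ⟨0, (), rhs⟩ ∈ P9 ↔ rhs = rhsStart := by
  simp only [P9, Set.mem_insert_iff, Set.mem_singleton_iff, Sigma.mk.injEq, heq_eq_eq, true_and,
    OfNat.zero_ne_ofNat, false_and, or_false, rhsStart, startArgs]
  exact Prod.mk_right_inj

theorem mem_P9_three_iff {rhs : Tm C9 3} :
    ⟨3, (), rhs⟩ ∈ P9 ↔ rhs = rhsPump ∨ rhs = rhsConcat := by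
  simp only [P9, Set.mem_insert_iff, Set.mem_singleton_iff, Sigma.mk.injEq, heq_eq_eq, true_and,
    OfNat.ofNat_ne_zero, false_and, false_or, rhsPump, pumpArgs, rhsConcat]
  exact or_congr Prod.mk_right_inj Prod.mk_right_inj

theorem startArgs_eq_chains : startArgs = fun i => (chains 0 i).inj := by
  funext i
  fin_cases i <;> exact (inj_leaf _).symm

theorem pumpArgs_subst_chains (k : ℕ) (i : Fin 3) :
    (pumpArgs i).subst (fun j => (chains k j).inj) = (chains (k + 1) i).inj := by
  fin_cases i <;>
    simp [pumpArgs, chains, letter, chain, cat9_subst, lf9_subst, inj_conc, inj_leaf, Tm.subst]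

theorem rhsConcat_subst_chains (k : ℕ) :
    rhsConcat.subst (fun j => (chains k j).inj) = (tree k).inj := by
  simp only [rhsConcat, tree, cat9_subst, inj_conc]
  rfl

def startForm : Tm C9 0 := .op (Sum.inr G9.start) Fin.elim0

def pumpForm (k : ℕ) : Tm C9 0 := .op (n := 3) (.inr ()) fun i => (chains k i).inj

theorem startForm_eq :
    startForm = .op (.inr G9.start) fun i => ((Fin.elim0 : Fin 0 → Tm sig9 0) i).inj :=
  congrArg _ (Subsingleton.elim _ _)

theorem ioStep_startForm {t : Tm C9 0} : IOStep P9 startForm t ↔ t = pumpForm 0 := by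
  rw [startForm_eq]
  refine (IOStep.op_inr_iff (τ := nt9) (m := 0) (F := ())).trans ?_
  simp only [mem_P9_zero_iff, exists_eq_left]
  rw [Subsingleton.elim (fun i => _) Tm.var, Tm.subst_var, rhsStart, startArgs_eq_chains]
  rfl

theorem ioStep_pumpForm {k : ℕ} {t : Tm C9 0} :
    IOStep P9 (pumpForm k) t ↔ t = pumpForm (k + 1) ∨ t = (tree k).inj := by
  refine IOStep.op_inr_iff.trans ?_
  simp only [mem_P9_three_iff, or_and_right, exists_or, exists_eq_left]
  simp only [rhsConcat_subst_chains, rhsPump, Tm.subst, pumpArgs_subst_chains]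
  rfl

theorem ioReachable_iff {t : Tm C9 0} :
    Relation.ReflTransGen (IOStep P9) startForm t ↔
      t = startForm ∨ ∃ k, t = pumpForm k ∨ t = (tree k).inj := by
  constructor
  · intro h
    induction h with
    | refl => exact .inl rfl
    | tail _ hstep ih =>
      rcases ih with rfl | ⟨k, rfl | rfl⟩
      · exact .inr ⟨0, .inl (ioStep_startForm.mp hstep)⟩
      · rcases ioStep_pumpForm.mp hstep with rfl | rfl
        · exact .inr ⟨k + 1, .inl rfl⟩
        · exact .inr ⟨k, .inr rfl⟩
      · exact absurd hstep (IOStep.not_inj _ _)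
  · have reach_pumpForm : ∀ k, Relation.ReflTransGen (IOStep P9) startForm (pumpForm k) := by
      intro k
      induction k with
      | zero => exact .single (ioStep_startForm.mpr rfl)
      | succ k ih => exact ih.tail (ioStep_pumpForm.mpr (.inl rfl))
    rintro (rfl | ⟨k, rfl | rfl⟩)
    · exact .refl
    · exact reach_pumpForm k
    · exact (reach_pumpForm k).tail (ioStep_pumpForm.mpr (.inr rfl))

theorem ioLang_eq_range_tree : IOLang G9 = Set.range tree := by
  ext t
  refine (ioReachable_iff (t := t.inj)).trans ⟨?_, ?_⟩
  · rintro (h | ⟨k, h | h⟩)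
    · exact (Tm.not_hasNonterminal_inj t (by rw [h]; exact Tm.hasNonterminal_op_inr _ _)).elim
    · exact (Tm.not_hasNonterminal_inj t (by rw [h]; exact Tm.hasNonterminal_op_inr _ _)).elim
    · exact ⟨k, Tm.inj_injective h.symm⟩
  · rintro ⟨k, rfl⟩
    exact .inr ⟨k, .inr rfl⟩

def symF : DTm C9 3 := .sym (.inr ())

def pumpLayer (X : DTm C9 3) : DTm C9 3 := .sub X fun i => (pumpArgs i).lift

def startLeaves : Fin 3 → DTm C9 0 := fun i => (startArgs i).lift

def liftedTree (k : ℕ) : DTm C9 0 := .sub (pumpLayer^[k] rhsConcat.lift) startLeaves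

theorem not_hasNonterminal_startLeaves (i : Fin 3) : ¬ (startLeaves i).HasNonterminal := by
  refine DTm.not_hasNonterminal_lift ?_
  fin_cases i <;> exact not_hasNonterminal_lf9 _

theorem not_hasNonterminal_pumpArgs (i : Fin 3) : ¬ (pumpArgs i).lift.HasNonterminal := by
  refine DTm.not_hasNonterminal_lift ?_
  fin_cases i <;> simp [pumpArgs, hasNonterminal_cat9, not_hasNonterminal_lf9, Tm.HasNonterminal]

theorem stepD_pumpLayer_iff {X Y : DTm C9 3} :
    StepD P9 (pumpLayer X) Y ↔ ∃ X', StepD P9 X X' ∧ Y = pumpLayer X' :=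
  StepD.sub_iff not_hasNonterminal_pumpArgs

theorem hasNonterminal_pumpLayer_iterate_iff {X : DTm C9 3} (k : ℕ) :
    (pumpLayer^[k] X).HasNonterminal ↔ X.HasNonterminal := by
  induction k with
  | zero => rfl
  | succ k ih =>
    rw [Function.iterate_succ_apply', ← ih]
    exact or_iff_left fun ⟨i, hi⟩ => not_hasNonterminal_pumpArgs i hi

theorem not_hasNonterminal_rhsConcat : ¬ rhsConcat.lift.HasNonterminal :=
  DTm.not_hasNonterminal_lift (by simp [rhsConcat, hasNonterminal_cat9, Tm.HasNonterminal])

theorem stepD_pumpLayer_iterate_symF {k : ℕ} {X : DTm C9 3} :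
    StepD P9 (pumpLayer^[k] symF) X ↔
      X = pumpLayer^[k + 1] symF ∨ X = pumpLayer^[k] rhsConcat.lift := by
  induction k generalizing X with
  | zero =>
    refine (StepD.sym_inr_iff (τ := nt9) (m := 3) (F := ())).trans ?_
    simp only [mem_P9_three_iff, or_and_right, exists_or, exists_eq_left]
    rfl
  | succ k ih =>
    rw [Function.iterate_succ_apply', stepD_pumpLayer_iff]
    simp only [ih, or_and_right, exists_or, exists_eq_left,
      ← Function.iterate_succ_apply' pumpLayer]

theorem reachable_symF_iff {X : DTm C9 3} :
    Relation.ReflTransGen (StepD P9) symF X ↔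
      ∃ k, X = pumpLayer^[k] symF ∨ X = pumpLayer^[k] rhsConcat.lift := by
  constructor
  · intro h
    induction h with
    | refl => exact ⟨0, .inl rfl⟩
    | tail _ hstep ih =>
      obtain ⟨k, rfl | rfl⟩ := ih
      · rcases stepD_pumpLayer_iterate_symF.mp hstep with rfl | rfl
        · exact ⟨k + 1, .inl rfl⟩
        · exact ⟨k, .inr rfl⟩
      · exact absurd hstep.hasNonterminal
          ((hasNonterminal_pumpLayer_iterate_iff k).not.mpr not_hasNonterminal_rhsConcat)
  · have reach_pump : ∀ k, Relation.ReflTransGen (StepD P9) symF (pumpLayer^[k] symF) := by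
      intro k
      induction k with
      | zero => exact .refl
      | succ k ih => exact ih.tail (stepD_pumpLayer_iterate_symF.mpr (.inl rfl))
    rintro ⟨k, rfl | rfl⟩
    · exact reach_pump k
    · exact (reach_pump k).tail (stepD_pumpLayer_iterate_symF.mpr (.inr rfl))

theorem stepD_start_iff {d : DTm C9 0} :
    StepD P9 (.sym (.inr G9.start)) d ↔ d = .sub symF startLeaves := by
  refine (StepD.sym_inr_iff (τ := nt9) (m := 0) (F := ())).trans ?_
  simp only [mem_P9_zero_iff, exists_eq_left]
  rfl

theorem liftedReachable_iff {d : DTm C9 0} :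
    Relation.ReflTransGen (StepD P9) (.sym (.inr G9.start)) d ↔
      d = .sym (.inr G9.start) ∨
        ∃ k, d = .sub (pumpLayer^[k] symF) startLeaves ∨ d = liftedTree k := by
  rw [Relation.ReflTransGen.cases_head_iff]
  simp only [stepD_start_iff, exists_eq_left, reachable_symF_iff,
    StepD.reflTransGen_sub_iff not_hasNonterminal_startLeaves]
  refine or_congr eq_comm ⟨?_, ?_⟩
  · rintro ⟨_, ⟨k, rfl | rfl⟩, rfl⟩
    exacts [⟨k, .inl rfl⟩, ⟨k, .inr rfl⟩]
  · rintro ⟨k, rfl | rfl⟩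
    exacts [⟨_, ⟨k, .inl rfl⟩, rfl⟩, ⟨_, ⟨k, .inr rfl⟩, rfl⟩]

theorem not_hasNonterminal_liftedTree (k : ℕ) : ¬ (liftedTree k).HasNonterminal := by
  rintro (h | ⟨i, hi⟩)
  · exact not_hasNonterminal_rhsConcat ((hasNonterminal_pumpLayer_iterate_iff k).mp h)
  · exact not_hasNonterminal_startLeaves i hi

theorem terminal_liftedReachable_iff {d : DTm C9 0} :
    Relation.ReflTransGen (StepD P9) (.sym (.inr G9.start)) d ∧ ¬ d.HasNonterminal ↔
      ∃ k, d = liftedTree k := by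
  rw [liftedReachable_iff]
  constructor
  · rintro ⟨rfl | ⟨k, rfl | rfl⟩, hd⟩
    · exact (hd trivial).elim
    · exact (hd (.inl ((hasNonterminal_pumpLayer_iterate_iff k).mpr trivial))).elim
    · exact ⟨k, rfl⟩
  · rintro ⟨k, rfl⟩
    exact ⟨.inr ⟨k, .inr rfl⟩, not_hasNonterminal_liftedTree k⟩

theorem beta_pumpLayer_iterate (k : ℕ) (X : DTm C9 3) :
    (pumpLayer^[k] X).beta.subst (fun i => (chains 0 i).inj) =
      X.beta.subst fun i => (chains k i).inj := by
  induction k generalizing X with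
  | zero => rfl
  | succ k ih =>
    rw [Function.iterate_succ_apply, ih, pumpLayer, DTm.beta, Tm.subst_subst]
    simp only [Tm.beta_lift, pumpArgs_subst_chains]

theorem beta_liftedTree (k : ℕ) : (liftedTree k).beta = (tree k).inj := by
  rw [liftedTree, DTm.beta]
  simp only [startLeaves, Tm.beta_lift, startArgs_eq_chains, beta_pumpLayer_iterate,
    rhsConcat_subst_chains]

theorem yield_chain (x : C3) (k : ℕ) :
    (chain x k).yield (fun {_} => w9) Fin.elim0 = List.replicate (k + 1) x := by
  induction k with
  | zero => simp [chain, leaf, Tm.yield, w9]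
  | succ k ih => simp [chain, leaf, conc, Tm.yield, w9, ih, List.replicate_succ]

theorem yield_tree (k : ℕ) :
    (tree k).yield (fun {_} => w9) Fin.elim0 =
      List.replicate (k + 1) C3.a ++ List.replicate (k + 1) C3.b ++
        List.replicate (k + 1) C3.c := by
  simp [tree, conc, Tm.yield, w9, yield_chain]

end G9

/-- the lifted regular tree grammar `G_D` over `D(Σ)` (with
productions `S → LIFT(F(a,b,c))` and `F → LIFT(rhs)` for the original
`F`-productions, i.e. `F → S(⌢,S(⌢,π_1,π_2),π_3)`
and `F → S(F, S(⌢,π_1,a), S(⌢,π_2,b), S(⌢,π_3,c))`) generates a regular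
tree language whose image under the evaluation map `β` is exactly the
inside-out context-free tree language of the original grammar, hence a tree
set with yield `{aⁿbⁿcⁿ | n ≥ 1}`. -/
theorem G9_lifted :
    IOLang G9 =
      {t : Tm sig9 0 | ∃ d : DTm sig9 0,
        Relation.ReflTransGen
          (fun a b : DTm C9 0 => StepD P9 a b)
          (.sym (Sum.inr G9.start)) (DTm.dInj (τ := nt9) d) ∧
        (DTm.dInj (τ := nt9) d).beta = Tm.inj (τ := nt9) t} ∧
    {w : List C3 | ∃ t ∈ IOLang G9, t.yield (fun {_} => w9) Fin.elim0 = w} =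
      {w | ∃ n : ℕ, 1 ≤ n ∧
        w = List.replicate n C3.a ++ List.replicate n C3.b ++
            List.replicate n C3.c} := by
  rw [G9.ioLang_eq_range_tree]
  constructor
  · ext t
    constructor
    · rintro ⟨k, rfl⟩
      obtain ⟨d, hd⟩ :=
        DTm.exists_dInj_of_not_hasNonterminal (G9.not_hasNonterminal_liftedTree k)
      refine ⟨d, ?_, by rw [hd, G9.beta_liftedTree]⟩
      exact hd ▸ (G9.terminal_liftedReachable_iff.mpr ⟨k, rfl⟩).1
    · rintro ⟨d, hreach, hbeta⟩
      obtain ⟨k, hk⟩ :=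
        G9.terminal_liftedReachable_iff.mp ⟨hreach, DTm.not_hasNonterminal_dInj d⟩
      exact ⟨k, Tm.inj_injective (by rw [← hbeta, hk, G9.beta_liftedTree])⟩
  · ext w
    simp only [Set.exists_range_iff, G9.yield_tree]
    constructor
    · rintro ⟨k, rfl⟩
      exact ⟨k + 1, k.succ_pos, rfl⟩
    · rintro ⟨n, hn, rfl⟩
      exact ⟨n - 1, by rw [Nat.sub_add_cancel hn]⟩
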